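/- Conversely, every minimal instance insertion of D into A is a minimal ABox repair of A ∪ {D} containing D. -/
import Mathlib

/-- A clause `H ← B`: head and body are finite sets of ground atoms. -/
structure Clause (α : Type) where
  head : Finset α
  body : Finset α
deriving DecidableEq

/-- An interpretation (a set of ground atoms) satisfies the clause `H ← B`. -/
def satClause {α : Type} (I : Set α) (C : Clause α) : Prop :=
  (∀ b ∈ C.body, b ∈ I) → ∃ h ∈ C.head, h ∈ I

/-- An interpretation satisfies a set of clauses. -/
def satSet {α : Type} (I : Set α) (N : Set (Clause α)) : Prop :=
  ∀ C ∈ N, satClause I C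

/-- `T ∪ A ⊨ D`: every model of `T` containing all atoms of `A` satisfies `D`. -/
def entails {α : Type} (T : Set (Clause α)) (A : Set α) (D : α) : Prop :=
  ∀ I : Set α, satSet I T → A ⊆ I → D ∈ I

/-- `T ∪ A` is consistent: some model of `T` contains all atoms of `A`. -/
def consistentWith {α : Type} (T : Set (Clause α)) (A : Set α) : Prop :=
  ∃ I : Set α, satSet I T ∧ A ⊆ I

variable {V : Type} [DecidableEq V]

/-- `A'` is a minimal ABox repair of `A` w.r.t. `T`: a subset of `A`
consistent with `T` and maximal with this property. -/
def isRepair (T : Set (Clause V)) (A A' : Finset V) : Prop :=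
  A' ⊆ A ∧ consistentWith T ↑A' ∧
    ∀ A'' : Finset V, A' ⊂ A'' → A'' ⊆ A → ¬ consistentWith T ↑A''

/-- `A'` is a minimal instance insertion of `D` into `A` w.r.t. `T`. -/
def minInsertion (T : Set (Clause V)) (A : Finset V) (D : V) (A' : Finset V) : Prop :=
  D ∈ A' ∧ A' \ {D} ⊆ A ∧ consistentWith T ↑A' ∧
    ∀ A'' : Finset V, D ∈ A'' → A' \ {D} ⊂ A'' \ {D} → A'' \ {D} ⊆ A →
      ¬ consistentWith T ↑A''

/-- every minimal instance insertion of `D` into `A` is a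
minimal ABox repair of `A ∪ {D}` containing `D`. -/
theorem insertion_is_repair (T : Set (Clause V))
    (hT : ∃ I : Set V, satSet I T) (A : Finset V) (D : V)
    (hD : consistentWith T {D})
    (A' : Finset V) (h : minInsertion T A D A') :
    isRepair T (insert D A) A' ∧ D ∈ A' := by
  obtain ⟨hDmem, hsub, hcons, hmax⟩ := h
  refine ⟨⟨?_, hcons, ?_⟩, hDmem⟩
  · intro x hx
    by_cases hxD : x = D
    · simp [hxD]
    · have : x ∈ A' \ {D} := by simp [hx, hxD]
      exact Finset.mem_insert_of_mem (hsub this)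
  · intro A'' hss hsubA'' hcons''
    have hD'' : D ∈ A'' := hss.1 hDmem
    apply hmax A'' hD'' ?_ ?_ hcons''
    · constructor
      · exact Finset.sdiff_subset_sdiff hss.1 le_rfl
      · intro hle
        apply hss.2
        intro x hx
        by_cases hxD : x = D
        · exact hxD ▸ hDmem
        · have : x ∈ A'' \ {D} := by simp [hx, hxD]
          have := hle this
          simp only [Finset.mem_sdiff] at this
          exact this.1
    · intro x hx
      simp only [Finset.mem_sdiff, Finset.mem_singleton] at hx
      have := hsubA'' hx.1
      simp only [Finset.mem_insert] at this
      tauto
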